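/- Let G be a finite simple graph with γ_{t2}(G) ≥ 3. If G has a minimum semitotal dominating set D containing a vertex x that has at least two witnesses in D (i.e., at least two other vertices of D at distance at most 2 from x), then ct_{γ_{t2}}(G) ≤ 2. -/

import Mathlib

open SimpleGraph

/-- `D` is a total dominating set of `G`: every vertex has a neighbour in `D`. -/
def IsTotalDomSet {V : Type*} (G : SimpleGraph V) (D : Set V) : Prop :=
  ∀ v : V, ∃ u ∈ D, G.Adj u v

/-- `x` and `y` are (distinct or not) at distance at most two:
adjacent or joined through a common neighbour. -/
def WithinTwo {V : Type*} (G : SimpleGraph V) (x y : V) : Prop :=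
  G.Adj x y ∨ ∃ z, G.Adj x z ∧ G.Adj z y

/-- `x` and `y` are at distance exactly two. -/
def DistTwo {V : Type*} (G : SimpleGraph V) (x y : V) : Prop :=
  x ≠ y ∧ ¬ G.Adj x y ∧ ∃ z, G.Adj x z ∧ G.Adj z y

/-- `D` is a semitotal dominating set of `G`: a dominating set in which every
vertex of `D` has another vertex of `D` within distance two (a witness). -/
def IsSemitotalDomSet {V : Type*} (G : SimpleGraph V) (D : Set V) : Prop :=
  (∀ v : V, v ∉ D → ∃ u ∈ D, G.Adj u v) ∧
  (∀ x ∈ D, ∃ y ∈ D, y ≠ x ∧ WithinTwo G x y)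

/-- The total domination number `γ_t`. -/
noncomputable def totalDomNum {V : Type*} (G : SimpleGraph V) [Fintype V] : ℕ :=
  sInf {n | ∃ D : Set V, IsTotalDomSet G D ∧ D.ncard = n}

/-- The semitotal domination number `γ_{t2}`. -/
noncomputable def semitotalDomNum {V : Type*} (G : SimpleGraph V) [Fintype V] : ℕ :=
  sInf {n | ∃ D : Set V, IsSemitotalDomSet G D ∧ D.ncard = n}

/-- The graph obtained from `G` by contracting the edge `xy`:
delete `y` and merge it into `x`. -/
def contractEdge {V : Type*} (G : SimpleGraph V) (x y : V) :
    SimpleGraph {v : V // v ≠ y} :=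
  SimpleGraph.fromRel (fun a b =>
    G.Adj a.1 b.1 ∨ (a.1 = x ∧ G.Adj y b.1) ∨ (b.1 = x ∧ G.Adj y a.1))

/-- A bundled finite simple graph. -/
structure FGraph : Type 1 where
  V : Type
  fin : Fintype V
  G : SimpleGraph V

attribute [instance] FGraph.fin

noncomputable def FGraph.tdn (A : FGraph) : ℕ := totalDomNum A.G

noncomputable def FGraph.stdn (A : FGraph) : ℕ := semitotalDomNum A.G

/-- `B` is obtained from `A` by contracting a single edge. -/
def FGraph.Contract (A B : FGraph) : Prop :=
  ∃ x y : A.V, A.G.Adj x y ∧ ∃ e : B.V ≃ {v : A.V // v ≠ y},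
    ∀ a b : B.V, B.G.Adj a b ↔ (contractEdge A.G x y).Adj (e a) (e b)

/-- `B` is obtained from `A` by a sequence of `n` edge contractions. -/
inductive ContractStar : ℕ → FGraph → FGraph → Prop
  | refl (A : FGraph) : ContractStar 0 A A
  | step {n : ℕ} {A B C : FGraph} : A.Contract B → ContractStar n B C →
      ContractStar (n + 1) A C

/-- At most `k` edge contractions suffice to decrease the total domination number by one. -/
def ctTDLe (A : FGraph) (k : ℕ) : Prop :=
  ∃ n ≤ k, ∃ B : FGraph, ContractStar n A B ∧ B.tdn = A.tdn - 1

/-- At most `k` edge contractions suffice to decrease the semitotal domination number by one. -/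
def ctSTLe (A : FGraph) (k : ℕ) : Prop :=
  ∃ n ≤ k, ∃ B : FGraph, ContractStar n A B ∧ B.stdn = A.stdn - 1

/-- `ct_{γ_t}`: the minimum number of edge contractions needed to decrease `γ_t` by one. -/
noncomputable def ctTDNum (A : FGraph) : ℕ :=
  sInf {n | ∃ B : FGraph, ContractStar n A B ∧ B.tdn = A.tdn - 1}

/-- `ct_{γ_{t2}}`: the minimum number of edge contractions needed to decrease `γ_{t2}` by one. -/
noncomputable def ctSTNum (A : FGraph) : ℕ :=
  sInf {n | ∃ B : FGraph, ContractStar n A B ∧ B.stdn = A.stdn - 1}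

/-- Disjoint union of two simple graphs. -/
def disjGraphUnion {α β : Type*} (G : SimpleGraph α) (H : SimpleGraph β) :
    SimpleGraph (α ⊕ β) :=
  SimpleGraph.fromRel (fun a b =>
    match a, b with
    | Sum.inl a, Sum.inl b => G.Adj a b
    | Sum.inr a, Sum.inr b => H.Adj a b
    | _, _ => False)

/-! Let `D` be a minimum semitotal dominating set and `x ∈ D` with two witnesses `y, z`.
Contracting an edge lowers `γ_{t2}` by at most one, since a semitotal dominating set of the
contraction lifts by adding one endpoint of the edge. If `x` has a neighbour `c ∈ D`, contracting
`xc` keeps `D \ {c}` semitotal dominating, because `x` still has a witness other than `c`.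
Otherwise `y` is reached through a neighbour `c ∉ D` of `x`; contracting `xc` keeps `D` semitotal
dominating and makes `x` adjacent to `y`, so either `γ_{t2}` has already dropped or `D` is still
minimum and the first case applies to the contracted graph. -/

section Contraction

variable {V : Type*} {G : SimpleGraph V} {x y : V}

theorem contractEdge_adj {a b : {v : V // v ≠ y}} :
    (contractEdge G x y).Adj a b ↔ a.1 ≠ b.1 ∧
      (G.Adj a.1 b.1 ∨ (a.1 = x ∧ G.Adj y b.1) ∨ (b.1 = x ∧ G.Adj y a.1)) := by
  simp only [contractEdge, fromRel_adj, ne_eq, Subtype.ext_iff, G.adj_comm b.1]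
  tauto

theorem contractEdge_adj_of_adj {a b : {v : V // v ≠ y}} (h : G.Adj a.1 b.1) :
    (contractEdge G x y).Adj a b :=
  contractEdge_adj.mpr ⟨h.ne, Or.inl h⟩

theorem contractEdge_adj_merged {a : {v : V // v ≠ y}} (hxy : G.Adj x y) (hax : a.1 ≠ x)
    (hya : G.Adj y a.1) : (contractEdge G x y).Adj ⟨x, hxy.ne⟩ a :=
  contractEdge_adj.mpr ⟨Ne.symm hax, Or.inr (Or.inl ⟨rfl, hya⟩)⟩

theorem WithinTwo.contractEdge_of_ne (hxy : G.Adj x y) {a b : {v : V // v ≠ y}} (hab : a ≠ b)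
    (h : WithinTwo G a.1 b.1) : WithinTwo (contractEdge G x y) a b := by
  have hab' : a.1 ≠ b.1 := Subtype.coe_ne_coe.mpr hab
  rcases h with h | ⟨d, had, hdb⟩
  · exact Or.inl (contractEdge_adj_of_adj h)
  by_cases hdy : d = y
  · subst hdy
    by_cases hax : a.1 = x
    · exact Or.inl (contractEdge_adj.mpr ⟨hab', Or.inr (Or.inl ⟨hax, hdb⟩)⟩)
    by_cases hbx : b.1 = x
    · exact Or.inl (contractEdge_adj.mpr ⟨hab', Or.inr (Or.inr ⟨hbx, had.symm⟩)⟩)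
    exact Or.inr ⟨⟨x, hxy.ne⟩, (contractEdge_adj_merged hxy hax had.symm).symm,
      contractEdge_adj_merged hxy hbx hdb⟩
  · exact Or.inr ⟨⟨d, hdy⟩, contractEdge_adj_of_adj had, contractEdge_adj_of_adj hdb⟩

theorem withinTwo_contractEdge_merged (hxy : G.Adj x y) {a : {v : V // v ≠ y}} (hax : a.1 ≠ x)
    (h : WithinTwo G a.1 y) : WithinTwo (contractEdge G x y) a ⟨x, hxy.ne⟩ := by
  rcases h with h | ⟨d, had, hdy⟩
  · exact Or.inl (contractEdge_adj_merged hxy hax h.symm).symm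
  by_cases hdx : d = x
  · exact Or.inl (contractEdge_adj_of_adj (hdx ▸ had))
  · exact Or.inr ⟨⟨d, hdy.ne⟩, contractEdge_adj_of_adj had,
      (contractEdge_adj_merged hxy hdx hdy.symm).symm⟩

theorem WithinTwo.of_contractEdge (hxy : G.Adj x y) {a b : {v : V // v ≠ y}}
    (h : WithinTwo (contractEdge G x y) a b) :
    WithinTwo G a.1 b.1 ∨ WithinTwo G a.1 x ∨ G.Adj a.1 y ∨
      (b.1 = x ∧ WithinTwo G a.1 y) := by
  rcases h with h | ⟨d, had, hdb⟩
  · rcases (contractEdge_adj.mp h).2 with h | ⟨hax, hyb⟩ | ⟨hbx, hya⟩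
    · exact Or.inl (Or.inl h)
    · exact Or.inl (Or.inr ⟨y, hax ▸ hxy, hyb⟩)
    · exact Or.inr (Or.inl (Or.inr ⟨y, hya.symm, hbx ▸ hxy.symm⟩))
  rcases (contractEdge_adj.mp had).2 with had | ⟨hax, -⟩ | ⟨-, hya⟩
  · rcases (contractEdge_adj.mp hdb).2 with hdb | ⟨hdx, -⟩ | ⟨hbx, hyd⟩
    · exact Or.inl (Or.inr ⟨d.1, had, hdb⟩)
    · exact Or.inr (Or.inl (Or.inl (hdx ▸ had)))
    · exact Or.inr (Or.inr (Or.inr ⟨hbx, Or.inr ⟨d.1, had, hyd.symm⟩⟩))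
  · exact Or.inr (Or.inr (Or.inl (hax ▸ hxy)))
  · exact Or.inr (Or.inr (Or.inl hya.symm))

variable {D : Set V}

theorem IsSemitotalDomSet.preimage_contractEdge (hD : IsSemitotalDomSet G D) (hxy : G.Adj x y)
    (hy : y ∈ D → x ∈ D ∧ ∃ w ∈ D, w ≠ y ∧ w ≠ x ∧ WithinTwo G x w) :
    IsSemitotalDomSet (contractEdge G x y) (Subtype.val ⁻¹' D) := by
  constructor
  · intro v hv
    obtain ⟨u, huD, huv⟩ := hD.1 v.1 hv
    by_cases huy : u = y
    · subst huy
      have hx := (hy huD).1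
      exact ⟨⟨x, hxy.ne⟩, hx,
        contractEdge_adj_merged hxy (fun hvx => hv (hvx ▸ hx : v.1 ∈ D)) huv⟩
    · exact ⟨⟨u, huy⟩, huD, contractEdge_adj_of_adj huv⟩
  · intro a ha
    obtain ⟨w, hwD, hwa, haw⟩ := hD.2 a.1 ha
    by_cases hwy : w = y
    · rw [hwy] at hwD haw
      obtain ⟨hx, w', hw'D, hw'y, hw'x, hxw'⟩ := hy hwD
      by_cases hax : a.1 = x
      · have hw'a : (⟨w', hw'y⟩ : {v : V // v ≠ y}) ≠ a :=
          fun h => hw'x ((congrArg Subtype.val h).trans hax)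
        exact ⟨⟨w', hw'y⟩, hw'D, hw'a, .contractEdge_of_ne hxy hw'a.symm (hax ▸ hxw')⟩
      · exact ⟨⟨x, hxy.ne⟩, hx, fun h => hax (congrArg Subtype.val h).symm,
          withinTwo_contractEdge_merged hxy hax haw⟩
    · exact ⟨⟨w, hwy⟩, hwD, fun h => hwa (congrArg Subtype.val h),
        haw.contractEdge_of_ne hxy fun h => hwa (congrArg Subtype.val h).symm⟩

theorem ncard_preimage_val_ne (D : Set V) (y : V) :
    (Subtype.val ⁻¹' D : Set {v : V // v ≠ y}).ncard = (D \ {y}).ncard := by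
  rw [← Set.ncard_image_of_injective _ Subtype.val_injective]
  congr 1
  ext v
  simp [and_comm]

end Contraction

section Lift

variable {V : Type*} {G : SimpleGraph V} {x y : V} {D' : Set {v : V // v ≠ y}}

theorem IsSemitotalDomSet.of_contractEdge_of_mem (hxy : G.Adj x y)
    (hD' : IsSemitotalDomSet (contractEdge G x y) D') (hx : ⟨x, hxy.ne⟩ ∈ D') :
    IsSemitotalDomSet G (insert y (Subtype.val '' D')) := by
  constructor
  · intro v hv
    have hvy : v ≠ y := by rintro rfl; exact hv (Set.mem_insert _ _)
    obtain ⟨u, huD, huv⟩ :=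
      hD'.1 ⟨v, hvy⟩ fun h => hv (Set.mem_insert_of_mem _ ⟨_, h, rfl⟩)
    rcases (contractEdge_adj.mp huv).2 with h | ⟨-, hyv⟩ | ⟨hvx, -⟩
    · exact ⟨u.1, Set.mem_insert_of_mem _ ⟨u, huD, rfl⟩, h⟩
    · exact ⟨y, Set.mem_insert y _, hyv⟩
    · exact ⟨y, Set.mem_insert y _, (show v = x from hvx) ▸ hxy.symm⟩
  · rintro a (rfl | ⟨u, huD, rfl⟩)
    · exact ⟨x, Set.mem_insert_of_mem _ ⟨_, hx, rfl⟩, hxy.ne, Or.inl hxy.symm⟩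
    obtain ⟨w, hwD, hwu, huw⟩ := hD'.2 u huD
    rcases huw.of_contractEdge hxy with h | h | h | ⟨-, h⟩
    · exact ⟨w.1, Set.mem_insert_of_mem _ ⟨w, hwD, rfl⟩, Subtype.coe_ne_coe.mpr hwu, h⟩
    · by_cases hux : u.1 = x
      · exact ⟨y, Set.mem_insert y _, u.2.symm, hux ▸ Or.inl hxy⟩
      · exact ⟨x, Set.mem_insert_of_mem _ ⟨_, hx, rfl⟩, Ne.symm hux, h⟩
    · exact ⟨y, Set.mem_insert y _, u.2.symm, Or.inl h⟩
    · exact ⟨y, Set.mem_insert y _, u.2.symm, h⟩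

theorem IsSemitotalDomSet.of_contractEdge_of_not_mem (hxy : G.Adj x y)
    (hD' : IsSemitotalDomSet (contractEdge G x y) D') (hx : ⟨x, hxy.ne⟩ ∉ D') :
    IsSemitotalDomSet G (insert x (Subtype.val '' D')) := by
  have hD'x : ∀ u ∈ D', u.1 ≠ x :=
    fun u hu h => hx ((Subtype.ext h : u = ⟨x, hxy.ne⟩) ▸ hu)
  constructor
  · intro v hv
    by_cases hvy : v = y
    · exact ⟨x, Set.mem_insert x _, hvy ▸ hxy⟩
    obtain ⟨u, huD, huv⟩ :=
      hD'.1 ⟨v, hvy⟩ fun h => hv (Set.mem_insert_of_mem _ ⟨_, h, rfl⟩)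
    rcases (contractEdge_adj.mp huv).2 with h | ⟨hux, -⟩ | ⟨hvx, -⟩
    · exact ⟨u.1, Set.mem_insert_of_mem _ ⟨u, huD, rfl⟩, h⟩
    · exact absurd hux (hD'x u huD)
    · exact absurd (Set.mem_insert_iff.mpr (Or.inl hvx)) hv
  · rintro a (rfl | ⟨u, huD, rfl⟩)
    · obtain ⟨u, huD, hux⟩ := hD'.1 _ hx
      refine ⟨u.1, Set.mem_insert_of_mem _ ⟨u, huD, rfl⟩, hD'x u huD, ?_⟩
      rcases (contractEdge_adj.mp hux).2 with h | ⟨h, -⟩ | ⟨-, hyu⟩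
      · exact Or.inl h.symm
      · exact absurd h (hD'x u huD)
      · exact Or.inr ⟨y, hxy, hyu⟩
    obtain ⟨w, hwD, hwu, huw⟩ := hD'.2 u huD
    rcases huw.of_contractEdge hxy with h | h | h | ⟨hwx, -⟩
    · exact ⟨w.1, Set.mem_insert_of_mem _ ⟨w, hwD, rfl⟩, Subtype.coe_ne_coe.mpr hwu, h⟩
    · exact ⟨x, Set.mem_insert x _, (hD'x u huD).symm, h⟩
    · exact ⟨x, Set.mem_insert x _, (hD'x u huD).symm, Or.inr ⟨y, h, hxy.symm⟩⟩
    · exact absurd hwx (hD'x w hwD)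

theorem IsSemitotalDomSet.exists_of_contractEdge (hxy : G.Adj x y)
    (hD' : IsSemitotalDomSet (contractEdge G x y) D') :
    ∃ D : Set V, IsSemitotalDomSet G D ∧ D.ncard ≤ D'.ncard + 1 := by
  have hcard (a : V) : (insert a (Subtype.val '' D')).ncard ≤ D'.ncard + 1 := by
    rw [← Set.ncard_image_of_injective D' Subtype.val_injective]
    exact Set.ncard_insert_le _ _
  by_cases hx : ⟨x, hxy.ne⟩ ∈ D'
  · exact ⟨_, hD'.of_contractEdge_of_mem hxy hx, hcard y⟩
  · exact ⟨_, hD'.of_contractEdge_of_not_mem hxy hx, hcard x⟩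

end Lift

theorem ctSTLe.mono {A : FGraph} {k l : ℕ} (h : ctSTLe A k) (hkl : k ≤ l) : ctSTLe A l :=
  let ⟨n, hn, B, hAB, hB⟩ := h
  ⟨n, hn.trans hkl, B, hAB, hB⟩

theorem ctSTLe_one_of_contract {A B : FGraph} (h : A.Contract B) (hB : B.stdn = A.stdn - 1) :
    ctSTLe A 1 :=
  ⟨1, le_rfl, B, .step h (.refl B), hB⟩

theorem ctSTLe_succ_of_contract {A B : FGraph} {k : ℕ} (h : A.Contract B) (hB : B.stdn = A.stdn)
    (hk : ctSTLe B k) : ctSTLe A (k + 1) :=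
  let ⟨n, hn, C, hBC, hC⟩ := hk
  ⟨n + 1, Nat.succ_le_succ hn, C, .step h hBC, hB ▸ hC⟩

namespace FGraph

noncomputable def contractAt (A : FGraph) (x y : A.V) : FGraph :=
  ⟨{v : A.V // v ≠ y}, Fintype.ofFinite _, contractEdge A.G x y⟩

theorem contract_contractAt (A : FGraph) {x y : A.V} (h : A.G.Adj x y) :
    A.Contract (A.contractAt x y) :=
  ⟨x, y, h, Equiv.refl _, fun _ _ => Iff.rfl⟩

theorem stdn_le_ncard (A : FGraph) {D : Set A.V} (hD : IsSemitotalDomSet A.G D) :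
    A.stdn ≤ D.ncard :=
  Nat.sInf_le ⟨D, hD, rfl⟩

theorem exists_isSemitotalDomSet_ncard_eq_stdn (A : FGraph) {D : Set A.V}
    (hD : IsSemitotalDomSet A.G D) :
    ∃ E : Set A.V, IsSemitotalDomSet A.G E ∧ E.ncard = A.stdn :=
  Nat.sInf_mem (s := {n | ∃ E : Set A.V, IsSemitotalDomSet A.G E ∧ E.ncard = n})
    ⟨_, D, hD, rfl⟩

theorem stdn_le_stdn_contractAt_add_one (A : FGraph) {x y : A.V} (hxy : A.G.Adj x y)
    {D' : Set {v : A.V // v ≠ y}} (hD' : IsSemitotalDomSet (contractEdge A.G x y) D') :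
    A.stdn ≤ (A.contractAt x y).stdn + 1 := by
  obtain ⟨E, hE, hEcard⟩ := (A.contractAt x y).exists_isSemitotalDomSet_ncard_eq_stdn hD'
  obtain ⟨D, hD, hDcard⟩ := hE.exists_of_contractEdge hxy
  exact (A.stdn_le_ncard hD).trans (hEcard ▸ hDcard)

theorem ctSTLe_one_of_adj (A : FGraph) {D : Set A.V} (hD : IsSemitotalDomSet A.G D)
    (hmin : D.ncard = A.stdn) {x y w : A.V} (hxy : A.G.Adj x y) (hx : x ∈ D) (hy : y ∈ D)
    (hw : w ∈ D) (hwy : w ≠ y) (hwx : w ≠ x) (hxw : WithinTwo A.G x w) : ctSTLe A 1 := by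
  have hD' := hD.preimage_contractEdge hxy fun _ => ⟨hx, w, hw, hwy, hwx, hxw⟩
  have hle : (A.contractAt x y).stdn ≤ D.ncard - 1 :=
    ((A.contractAt x y).stdn_le_ncard hD').trans_eq
      ((ncard_preimage_val_ne D y).trans (Set.ncard_sdiff_singleton_of_mem hy))
  have hge := A.stdn_le_stdn_contractAt_add_one hxy hD'
  exact ctSTLe_one_of_contract (A.contract_contractAt hxy) (by omega)

theorem ctSTLe_two_of_adj_adj (A : FGraph) {D : Set A.V} (hD : IsSemitotalDomSet A.G D)
    (hmin : D.ncard = A.stdn) {x c y z : A.V} (hxc : A.G.Adj x c) (hcy : A.G.Adj c y)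
    (hx : x ∈ D) (hc : c ∉ D) (hy : y ∈ D) (hz : z ∈ D) (hyx : y ≠ x) (hzy : z ≠ y)
    (hzx : z ≠ x) (hxz : WithinTwo A.G x z) : ctSTLe A 2 := by
  have hB : IsSemitotalDomSet (A.contractAt x c).G (Subtype.val ⁻¹' D) :=
    hD.preimage_contractEdge hxc (absurd · hc)
  have hBcard : (Subtype.val ⁻¹' D : Set (A.contractAt x c).V).ncard = A.stdn :=
    (ncard_preimage_val_ne D c).trans (by rw [Set.sdiff_singleton_eq_self hc, hmin])
  rcases (hBcard ▸ (A.contractAt x c).stdn_le_ncard hB).lt_or_eq with hlt | heq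
  · have hge := A.stdn_le_stdn_contractAt_add_one hxc hB
    exact (ctSTLe_one_of_contract (A.contract_contractAt hxc) (by omega)).mono one_le_two
  have hxy : (A.contractAt x c).G.Adj ⟨x, hxc.ne⟩ ⟨y, fun h => hc (h ▸ hy)⟩ :=
    contractEdge_adj_merged hxc hyx hcy
  have hxz' : WithinTwo (A.contractAt x c).G ⟨x, hxc.ne⟩ ⟨z, fun h => hc (h ▸ hz)⟩ :=
    hxz.contractEdge_of_ne hxc fun h => hzx (congrArg Subtype.val h).symm
  exact ctSTLe_succ_of_contract (A.contract_contractAt hxc) heq <|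
    (A.contractAt x c).ctSTLe_one_of_adj hB (hBcard.trans heq.symm) hxy hx hy (w := ⟨z, _⟩) hz
      (fun h => hzy (congrArg Subtype.val h)) (fun h => hzx (congrArg Subtype.val h)) hxz'

end FGraph

theorem stmt2_general (A : FGraph)
    (hD : ∃ D : Set A.V, IsSemitotalDomSet A.G D ∧ D.ncard = A.stdn ∧
      ∃ x ∈ D, ∃ y ∈ D, ∃ z ∈ D, y ≠ z ∧ y ≠ x ∧ z ≠ x ∧
        WithinTwo A.G x y ∧ WithinTwo A.G x z) :
    ctSTLe A 2 := by
  obtain ⟨D, hD, hmin, x, hx, y, hy, z, hz, hyz, hyx, hzx, hxy, hxz⟩ := hD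
  rcases hxy with hxy | ⟨c, hxc, hcy⟩
  · exact (A.ctSTLe_one_of_adj hD hmin hxy hx hy hz hyz.symm hzx hxz).mono one_le_two
  by_cases hc : c ∈ D
  · have hw : ∃ w ∈ D, w ≠ c ∧ w ≠ x ∧ WithinTwo A.G x w := by
      by_cases hyc : y = c
      · exact ⟨z, hz, hyc ▸ hyz.symm, hzx, hxz⟩
      · exact ⟨y, hy, hyc, hyx, Or.inr ⟨c, hxc, hcy⟩⟩
    obtain ⟨w, hw, hwc, hwx, hxw⟩ := hw
    exact (A.ctSTLe_one_of_adj hD hmin hxc hx hc hw hwc hwx hxw).mono one_le_two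
  · exact A.ctSTLe_two_of_adj_adj hD hmin hxc hcy hx hc hy hz hyx hyz.symm hzx hxz

/-- If `γ_{t2}(G) ≥ 3` and some minimum semitotal dominating set of `G` contains a
vertex `x` with at least two witnesses, then `ct_{γ_{t2}}(G) ≤ 2`. -/
theorem stmt2 (A : FGraph) (h3 : 3 ≤ A.stdn)
    (hD : ∃ D : Set A.V, IsSemitotalDomSet A.G D ∧ D.ncard = A.stdn ∧
      ∃ x ∈ D, ∃ y ∈ D, ∃ z ∈ D, y ≠ z ∧ y ≠ x ∧ z ≠ x ∧
        WithinTwo A.G x y ∧ WithinTwo A.G x z) :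
    ctSTLe A 2 :=
  stmt2_general A hD
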